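/- arXiv:2504.19668 — 2 statements merged into one kernel-verified Lean document; each statement's English description precedes it below -/
import Mathlib

section
/- Let κ be a kernel satisfying (κ₁) for order 2 and (κ₂), and let h : ℝ₊ → ℝ₊ be bounded with w·h log-continuous at a point z ∈ ℝ₊. Then lim_{m→∞} M_m^κ(h, z) = h(z), where M_m^κ is the max-product Kantorovich exponential sampling operator taken over all j ∈ ℤ. -/
open Real MeasureTheory

/-!
Numerator and denominator of `M_m^κ(h, z)` are suprema over the same weights
`κ_j = κ(e^{-j} z^m)`, so `|M_m^κ(h, z) - h z| ≤ sup_j |κ_j| |A_j - h z| / sup_j κ_j`, where `A_j`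
is the mean of `h ∘ exp` over `[j/m, (j+1)/m]`. The denominator is at least `ζ`, witnessed by
`j = ⌊m log z⌋`. On cells with `|j/m - log z| ≤ δ/2` the mean `A_j` is within the continuity
tolerance of `h z`; on the others `|j - m log z| > mδ/2`, and the second-moment condition gives
`|κ_j| ≤ 4 M₂ / (mδ)²`, which vanishes as `m → ∞` while `|A_j - h z|` stays bounded.
-/

/-- Max-product Kantorovich exponential sampling operator over all integers. -/
noncomputable def MopZ (κ : ℝ → ℝ) (m : ℝ) (h : ℝ → ℝ) (z : ℝ) : ℝ :=
  sSup (Set.range fun j : ℤ => κ (Real.exp (-(j : ℝ)) * z ^ m) *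
      (m * ∫ v in (j : ℝ)/m..((j : ℝ) + 1)/m, h (Real.exp v))) /
  sSup (Set.range fun j : ℤ => κ (Real.exp (-(j : ℝ)) * z ^ m))

/-- Log-uniform continuity on the positive reals. -/
def LogUC (g : ℝ → ℝ) : Prop :=
  ∀ ε : ℝ, 0 < ε → ∃ δ : ℝ, 0 < δ ∧ ∀ z₁ : ℝ, 0 < z₁ → ∀ z₂ : ℝ, 0 < z₂ →
    |Real.log z₁ - Real.log z₂| ≤ δ → |g z₁ - g z₂| < ε

/-- Membership in the weighted space `V^w(ℝ₊)`, `w z = 1/(1+(log z)^2)`. -/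
def MemVw (h : ℝ → ℝ) : Prop :=
  LogUC (fun z => h z / (1 + (Real.log z) ^ 2)) ∧
    ∃ K : ℝ, ∀ z : ℝ, 0 < z → |h z| / (1 + (Real.log z) ^ 2) ≤ K

/-- Weighted logarithmic modulus of continuity. -/
noncomputable def Upsilon (h : ℝ → ℝ) (ρ : ℝ) : ℝ :=
  sSup {y : ℝ | ∃ u z : ℝ, 0 < u ∧ 0 < z ∧ |Real.log u| ≤ ρ ∧
    y = |h (u * z) - h z| / ((1 + (Real.log z) ^ 2) * (1 + (Real.log u) ^ 2))}

theorem abs_ciSup_sub_ciSup_le {ι : Type*} [Nonempty ι] {f g : ι → ℝ} {c : ℝ}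
    (hf : BddAbove (Set.range f)) (hg : BddAbove (Set.range g))
    (hfg : ∀ i, |f i - g i| ≤ c) : |(⨆ i, f i) - ⨆ i, g i| ≤ c := by
  rw [abs_sub_le_iff, sub_le_iff_le_add, sub_le_iff_le_add]
  constructor
  · refine ciSup_le fun i => ?_
    linarith [(abs_sub_le_iff.1 (hfg i)).1, le_ciSup hg i]
  · refine ciSup_le fun i => ?_
    linarith [(abs_sub_le_iff.1 (hfg i)).2, le_ciSup hf i]

theorem abs_ciSup_mul_div_ciSup_sub_le {ι : Type*} [Nonempty ι] {f g : ι → ℝ} {c η ζ : ℝ}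
    (hg : BddAbove (Set.range g)) (hc : 0 ≤ c) (hζ : 0 < ζ) (hζg : ζ ≤ ⨆ i, g i)
    (hη : ∀ i, |g i * (f i - c)| ≤ η) :
    |(⨆ i, g i * f i) / (⨆ i, g i) - c| ≤ η / ζ := by
  have hD : 0 < ⨆ i, g i := hζ.trans_le hζg
  have hgc : BddAbove (Set.range fun i => g i * c) :=
    ⟨(⨆ i, g i) * c, by
      rintro _ ⟨i, rfl⟩
      exact mul_le_mul_of_nonneg_right (le_ciSup hg i) hc⟩
  have hgf : BddAbove (Set.range fun i => g i * f i) :=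
    ⟨(⨆ i, g i) * c + η, by
      rintro _ ⟨i, rfl⟩
      have := mul_le_mul_of_nonneg_right (le_ciSup hg i) hc
      linarith [le_abs_self (g i * (f i - c)), hη i]⟩
  have hnum : |(⨆ i, g i * f i) - (⨆ i, g i) * c| ≤ η := by
    rw [Real.iSup_mul_of_nonneg hc]
    exact abs_ciSup_sub_ciSup_le hgf hgc fun i => by rw [← mul_sub]; exact hη i
  have hη0 : 0 ≤ η := (abs_nonneg _).trans (hη (Classical.arbitrary ι))
  calc |(⨆ i, g i * f i) / (⨆ i, g i) - c|
      = |(⨆ i, g i * f i) - (⨆ i, g i) * c| / ⨆ i, g i := by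
        rw [← abs_of_pos hD, ← abs_div, abs_of_pos hD, sub_div, mul_div_cancel_left₀ _ hD.ne']
    _ ≤ η / ⨆ i, g i := by gcongr
    _ ≤ η / ζ := by gcongr

theorem exists_int_exp_neg_mul_mem_Icc {s : ℝ} (hs : 0 < s) :
    ∃ j : ℤ, Real.exp (-(j : ℝ)) * s ∈ Set.Icc 1 (Real.exp 1) := by
  refine ⟨⌊Real.log s⌋, ?_⟩
  rw [← Real.exp_log hs, ← Real.exp_add, Real.log_exp]
  exact ⟨Real.one_le_exp (by linarith [Int.floor_le (Real.log s)]),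
    Real.exp_le_exp.2 (by linarith [Int.lt_floor_add_one (Real.log s)])⟩

theorem intervalIntegrable_of_abs_le {f : ℝ → ℝ} {K : ℝ} (hf : Measurable f)
    (hK : ∀ x, |f x| ≤ K) (a b : ℝ) : IntervalIntegrable f volume a b :=
  intervalIntegrable_const.mono_fun' hf.aestronglyMeasurable
    (Filter.Eventually.of_forall hK)

noncomputable def kantorovichMean (h : ℝ → ℝ) (m : ℝ) (j : ℤ) : ℝ :=
  m * ∫ v in (j : ℝ) / m..((j : ℝ) + 1) / m, h (Real.exp v)

theorem MopZ_eq (κ : ℝ → ℝ) (m : ℝ) (h : ℝ → ℝ) (z : ℝ) :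
    MopZ κ m h z = (⨆ j : ℤ, κ (Real.exp (-(j : ℝ)) * z ^ m) * kantorovichMean h m j) /
      ⨆ j : ℤ, κ (Real.exp (-(j : ℝ)) * z ^ m) := rfl

section

variable {κ h : ℝ → ℝ} {m z c δ ε B M2 K : ℝ}

theorem abs_kantorovichMean_sub_le (hm : 0 < m) {j : ℤ}
    (hint : IntervalIntegrable (fun v => h (Real.exp v)) volume ((j : ℝ) / m) (((j : ℝ) + 1) / m))
    (hbound : ∀ v ∈ Set.Icc ((j : ℝ) / m) (((j : ℝ) + 1) / m), |h (Real.exp v) - c| ≤ ε) :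
    |kantorovichMean h m j - c| ≤ ε := by
  have hlen : ((j : ℝ) + 1) / m - (j : ℝ) / m = m⁻¹ := by field_simp; ring
  have hab : (j : ℝ) / m ≤ ((j : ℝ) + 1) / m := by linarith [inv_pos.2 hm]
  have hsub : kantorovichMean h m j - c
      = m * ∫ v in (j : ℝ) / m..((j : ℝ) + 1) / m, (h (Real.exp v) - c) := by
    rw [intervalIntegral.integral_sub hint intervalIntegrable_const,
      intervalIntegral.integral_const, smul_eq_mul, hlen, kantorovichMean]
    field_simp
  have hint_le := intervalIntegral.norm_integral_le_of_norm_le_const (C := ε)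
    (f := fun v => h (Real.exp v) - c) (a := (j : ℝ) / m) (b := ((j : ℝ) + 1) / m)
    fun v hv => hbound v (Set.Ioc_subset_Icc_self (by rwa [Set.uIoc_of_le hab] at hv))
  rw [Real.norm_eq_abs, hlen, abs_of_pos (inv_pos.2 hm)] at hint_le
  rw [hsub, abs_mul, abs_of_pos hm]
  calc m * _ ≤ m * (ε * m⁻¹) := mul_le_mul_of_nonneg_left hint_le hm.le
    _ = ε := by field_simp

theorem abs_kernel_mul_kantorovichMean_sub_le (hz : 0 < z) (hm : 0 < m) (hmδ : 2 ≤ m * δ)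
    (hκb : ∀ x, 0 < x → |κ x| ≤ B)
    (hm2 : ∀ s, 0 < s → ∀ j : ℤ,
      |κ (Real.exp (-(j : ℝ)) * s)| * |(j : ℝ) - Real.log s| ^ 2 ≤ M2)
    (hint : ∀ a b, IntervalIntegrable (fun v => h (Real.exp v)) volume a b)
    (hK : ∀ u, 0 < u → |h u - h z| ≤ K)
    (hδc : ∀ u, 0 < u → |Real.log u - Real.log z| ≤ δ → |h u - h z| ≤ ε) (j : ℤ) :
    |κ (Real.exp (-(j : ℝ)) * z ^ m) * (kantorovichMean h m j - h z)|
      ≤ max (B * ε) (M2 * K / (m * δ / 2) ^ 2) := by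
  have hzm : 0 < Real.exp (-(j : ℝ)) * z ^ m := by positivity
  rw [abs_mul]
  by_cases hnear : |(j : ℝ) / m - Real.log z| ≤ δ / 2
  · have hB : 0 ≤ B := (abs_nonneg _).trans (hκb 1 one_pos)
    refine le_max_of_le_left (mul_le_mul (hκb _ hzm) ?_ (abs_nonneg _) hB)
    refine abs_kantorovichMean_sub_le hm (hint _ _) fun v hv => hδc _ (Real.exp_pos v) ?_
    have hv' : |v - (j : ℝ) / m| ≤ δ / 2 := by
      have hright : ((j : ℝ) + 1) / m = (j : ℝ) / m + m⁻¹ := by rw [add_div, one_div]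
      have hwidth : m⁻¹ ≤ δ / 2 := by rw [inv_le_iff_one_le_mul₀ hm]; linarith
      rw [abs_le]
      constructor <;> linarith [hv.1, hv.2]
    rw [Real.log_exp]
    calc |v - Real.log z| ≤ |v - (j : ℝ) / m| + |(j : ℝ) / m - Real.log z| := abs_sub_le _ _ _
      _ ≤ δ := by linarith
  · push Not at hnear
    have hfar : m * δ / 2 < |(j : ℝ) - Real.log (z ^ m)| := by
      rw [Real.log_rpow hz, show (j : ℝ) - m * Real.log z = m * ((j : ℝ) / m - Real.log z) by
        field_simp, abs_mul, abs_of_pos hm, mul_div_assoc]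
      exact mul_lt_mul_of_pos_left hnear hm
    have hκ : |κ (Real.exp (-(j : ℝ)) * z ^ m)| * (m * δ / 2) ^ 2 ≤ M2 :=
      (mul_le_mul_of_nonneg_left (pow_le_pow_left₀ (by linarith) hfar.le 2)
        (abs_nonneg _)).trans (hm2 _ (by positivity) j)
    have hM2 : 0 ≤ M2 := (mul_nonneg (abs_nonneg _) (sq_nonneg _)).trans hκ
    have hmean : |kantorovichMean h m j - h z| ≤ K :=
      abs_kantorovichMean_sub_le hm (hint _ _) fun v _ => hK _ (Real.exp_pos v)
    refine le_max_of_le_right ?_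
    rw [le_div_iff₀ (by nlinarith)]
    calc _ = |κ (Real.exp (-(j : ℝ)) * z ^ m)| * (m * δ / 2) ^ 2
          * |kantorovichMean h m j - h z| := by ring
      _ ≤ M2 * K := mul_le_mul hκ hmean (abs_nonneg _) hM2

theorem abs_MopZ_sub_le {ζ : ℝ} (hz : 0 < z) (hm : 0 < m) (hmδ : 2 ≤ m * δ)
    (hκb : ∀ x, 0 < x → |κ x| ≤ B)
    (hm2 : ∀ s, 0 < s → ∀ j : ℤ,
      |κ (Real.exp (-(j : ℝ)) * s)| * |(j : ℝ) - Real.log s| ^ 2 ≤ M2)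
    (hζ : 0 < ζ) (hinf : ∀ u ∈ Set.Icc (1 : ℝ) (Real.exp 1), ζ ≤ κ u)
    (hint : ∀ a b, IntervalIntegrable (fun v => h (Real.exp v)) volume a b)
    (hhz : 0 ≤ h z) (hK : ∀ u, 0 < u → |h u - h z| ≤ K)
    (hδc : ∀ u, 0 < u → |Real.log u - Real.log z| ≤ δ → |h u - h z| ≤ ε) :
    |MopZ κ m h z - h z| ≤ max (B * ε) (M2 * K / (m * δ / 2) ^ 2) / ζ := by
  obtain ⟨j₀, hj₀⟩ := exists_int_exp_neg_mul_mem_Icc (Real.rpow_pos_of_pos hz m)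
  have hbdd : BddAbove (Set.range fun j : ℤ => κ (Real.exp (-(j : ℝ)) * z ^ m)) :=
    ⟨B, by
      rintro _ ⟨j, rfl⟩
      exact (le_abs_self _).trans (hκb _ (by positivity))⟩
  rw [MopZ_eq]
  exact abs_ciSup_mul_div_ciSup_sub_le hbdd hhz hζ ((hinf _ hj₀).trans (le_ciSup hbdd j₀))
    (abs_kernel_mul_kantorovichMean_sub_le hz hm hmδ hκb hm2 hint hK hδc)

end

theorem MopZ_pointwise_convergence_general (κ : ℝ → ℝ)
    (B M2 ζ : ℝ) (hκb : ∀ x : ℝ, 0 < x → |κ x| ≤ B)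
    (hm2 : ∀ s : ℝ, 0 < s → ∀ j : ℤ,
      |κ (Real.exp (-(j : ℝ)) * s)| * |(j : ℝ) - Real.log s| ^ 2 ≤ M2)
    (hζ : 0 < ζ) (hinf : ∀ u ∈ Set.Icc (1 : ℝ) (Real.exp 1), ζ ≤ κ u)
    (h : ℝ → ℝ) (hmeas : Measurable h) (hpos : ∀ x : ℝ, 0 < x → 0 ≤ h x)
    (hb : ∃ K : ℝ, ∀ x : ℝ, 0 < x → h x ≤ K)
    (z : ℝ) (hz : 0 < z)
    (hcont : ∀ ε : ℝ, 0 < ε → ∃ δ : ℝ, 0 < δ ∧ ∀ u : ℝ, 0 < u →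
      |Real.log u - Real.log z| ≤ δ → |h u - h z| < ε) :
    Filter.Tendsto (fun m : ℝ => MopZ κ m h z) Filter.atTop (nhds (h z)) := by
  obtain ⟨K, hK⟩ := hb
  have hB : 0 < B :=
    hζ.trans_le ((hinf 1 ⟨le_rfl, Real.one_le_exp zero_le_one⟩).trans
      ((le_abs_self _).trans (hκb 1 one_pos)))
  have hhK : ∀ u, 0 < u → |h u - h z| ≤ K := fun u hu =>
    abs_sub_le_iff.2 ⟨by linarith [hK u hu, hpos z hz], by linarith [hK z hz, hpos u hu]⟩
  have hint : ∀ a b, IntervalIntegrable (fun v => h (Real.exp v)) volume a b :=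
    intervalIntegrable_of_abs_le (hmeas.comp Real.measurable_exp) (K := K) fun v => by
      rw [abs_of_nonneg (hpos _ (Real.exp_pos v))]; exact hK _ (Real.exp_pos v)
  refine Metric.tendsto_nhds.2 fun ε hε => ?_
  obtain ⟨δ, hδ, hδc⟩ := hcont (ζ * ε / (2 * B)) (by positivity)
  have hdecay : Filter.Tendsto (fun m : ℝ => M2 * K / (m * δ / 2) ^ 2) Filter.atTop (nhds 0) :=
    tendsto_const_nhds.div_atTop <| (Filter.tendsto_pow_atTop two_ne_zero).comp
      ((Filter.tendsto_id.atTop_mul_const hδ).atTop_div_const two_pos)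
  filter_upwards [Filter.eventually_gt_atTop 0, Filter.eventually_ge_atTop (2 / δ),
    hdecay.eventually (gt_mem_nhds (mul_pos hζ hε))] with m hm hmδ hsmall
  rw [Real.dist_eq]
  refine (abs_MopZ_sub_le hz hm ((div_le_iff₀ hδ).1 hmδ) hκb hm2 hζ hinf hint (hpos z hz) hhK
    fun u hu hu' => (hδc u hu hu').le).trans_lt ?_
  rw [div_lt_iff₀' hζ]
  refine max_lt ?_ hsmall
  rw [show B * (ζ * ε / (2 * B)) = ζ * ε / 2 by field_simp]
  linarith [mul_pos hζ hε]

theorem MopZ_pointwise_convergence (κ : ℝ → ℝ) (hκmeas : Measurable κ)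
    (B M2 ζ : ℝ) (hκb : ∀ x : ℝ, 0 < x → |κ x| ≤ B)
    (hm2 : ∀ s : ℝ, 0 < s → ∀ j : ℤ,
      |κ (Real.exp (-(j : ℝ)) * s)| * |(j : ℝ) - Real.log s| ^ 2 ≤ M2)
    (hζ : 0 < ζ) (hinf : ∀ u ∈ Set.Icc (1 : ℝ) (Real.exp 1), ζ ≤ κ u)
    (h : ℝ → ℝ) (hmeas : Measurable h) (hpos : ∀ x : ℝ, 0 < x → 0 ≤ h x)
    (hb : ∃ K : ℝ, ∀ x : ℝ, 0 < x → h x ≤ K)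
    (z : ℝ) (hz : 0 < z)
    (hcont : ∀ ε : ℝ, 0 < ε → ∃ δ : ℝ, 0 < δ ∧ ∀ u : ℝ, 0 < u →
      |Real.log u - Real.log z| ≤ δ → |h u - h z| < ε) :
    Filter.Tendsto (fun m : ℝ => MopZ κ m h z) Filter.atTop (nhds (h z)) :=
  MopZ_pointwise_convergence_general κ B M2 ζ hκb hm2 hζ hinf h hmeas hpos hb z hz hcont
end

section
/- Let κ be a kernel satisfying (κ₁) for order 5 and (κ₂) with ζ > 0. Then for every h ∈ V₊^w(ℝ₊) and every m ≥ 1, the quantitative estimate holds: sup_{z>0} w(z)|M_m^κ(h, z) − h(z)| ≤ (256 Υ(h, 1/m)/ζ) [m₀(κ) + 4 m₅(κ)]. -/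
open Real MeasureTheory

/-! In logarithmic coordinates `g = h ∘ exp`, `Υ(h, ρ)` bounds an increment of `g` over a step
`|t| ≤ ρ` at `x` by `Υ (1 + x²)(1 + t²)`. Chaining `⌈m |y - x|⌉` steps of length at most `1/m`
gives `|g y - g x| ≤ 64 Υ(h, 1/m) (1 + x²)(1 + m⁵ |y - x|⁵)`. Averaging this over
`[j/m, (j+1)/m]` (exactly, through the antiderivative of `|v|⁵`) and weighting by the kernel
sample `κ(e^{-j} z^m)`, whose moments are `m₀` and `m₅`, shows that every sample of the numerator
of `M_m^κ(h, z)` is within `256 Υ (1 + log² z)(m₀ + 4 m₅)` of `h z` times the matching sample of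
the denominator. Passing to suprema and using that the denominator is at least `ζ` (take
`j = ⌊m log z⌋`) gives the estimate. -/

lemma hasDerivAt_pow_five_mul_abs_div_six (t : ℝ) :
    HasDerivAt (fun x : ℝ => x ^ 5 * |x| / 6) (|t| ^ 5) t := by
  rcases lt_trichotomy t 0 with ht | rfl | ht
  · refine (((hasDerivAt_pow 5 t).mul (hasDerivAt_abs_neg ht)).div_const 6).congr_deriv ?_
    rw [abs_of_neg ht]; ring
  · rw [abs_zero, zero_pow (by norm_num : 5 ≠ 0), hasDerivAt_iff_tendsto_slope]
    have hcont : Filter.Tendsto (fun x : ℝ => x ^ 4 * |x| / 6) (nhds 0) (nhds 0) := by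
      simpa using (by fun_prop : Continuous fun x : ℝ => x ^ 4 * |x| / 6).tendsto 0
    refine (hcont.mono_left nhdsWithin_le_nhds).congr' ?_
    filter_upwards [self_mem_nhdsWithin] with x hx
    simp only [slope_def_field]
    field_simp [show x ≠ 0 from hx]
    ring
  · refine (((hasDerivAt_pow 5 t).mul (hasDerivAt_abs_pos ht)).div_const 6).congr_deriv ?_
    rw [abs_of_pos ht]; ring

lemma integral_abs_sub_pow_five (a b c : ℝ) :
    ∫ v in a..b, |v - c| ^ 5 = ((b - c) ^ 5 * |b - c| - (a - c) ^ 5 * |a - c|) / 6 := by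
  have hderiv (v : ℝ) : HasDerivAt (fun v : ℝ => (v - c) ^ 5 * |v - c| / 6) (|v - c| ^ 5) v :=
    (hasDerivAt_pow_five_mul_abs_div_six (v - c)).comp_sub_const v c
  rw [intervalIntegral.integral_eq_sub_of_hasDerivAt (fun v _ => hderiv v)
    ((by fun_prop : Continuous fun v : ℝ => |v - c| ^ 5).intervalIntegrable a b)]
  ring

lemma pow_five_mul_abs_add_one_sub_le (c : ℝ) :
    ((c + 1) ^ 5 * |c + 1| - c ^ 5 * |c|) / 6 ≤ 3 + 16 * |c| ^ 5 := by
  rcases le_or_gt 0 c with hc | hc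
  · rw [abs_of_nonneg hc, abs_of_nonneg (by linarith : (0:ℝ) ≤ c + 1)]
    nlinarith [pow_nonneg hc 2, pow_nonneg hc 3, pow_nonneg hc 4, pow_nonneg hc 5,
      sq_nonneg (c - 1), sq_nonneg (c ^ 2 - c), sq_nonneg (c ^ 2 - 1),
      mul_nonneg (mul_nonneg hc hc) hc, sq_nonneg (c ^ 2 - c - 1),
      mul_nonneg (sq_nonneg (c - 1)) (mul_nonneg (mul_nonneg hc hc) hc),
      mul_nonneg (sq_nonneg (c - 1)) (sq_nonneg c),
      mul_nonneg (sq_nonneg (c - 1)) (sq_nonneg (c + 1))]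
  have hc' : (0:ℝ) ≤ -c := by linarith
  rcases le_or_gt (c + 1) 0 with hc1 | hc1
  · rw [abs_of_neg hc, abs_of_nonpos hc1]
    nlinarith [pow_nonneg hc' 5, pow_nonneg hc' 4, pow_nonneg hc' 3, sq_nonneg c,
      sq_nonneg (c + 1), mul_nonneg (sq_nonneg (c + 1)) (pow_nonneg hc' 3)]
  · rw [abs_of_neg hc, abs_of_pos hc1]
    have h1 : (c + 1) ^ 5 * (c + 1) ≤ 1 := by
      nlinarith [pow_le_one₀ hc1.le (by linarith : c + 1 ≤ 1) (n := 6)]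
    have h2 : -1 ≤ c ^ 5 * (-c) := by
      nlinarith [pow_le_one₀ hc' (by linarith : -c ≤ 1) (n := 6)]
    nlinarith [pow_nonneg hc' 5]

lemma pow_six_mul_integral_abs_sub_pow_five_le {m : ℝ} (hm : 0 < m) (a x : ℝ) :
    m ^ 6 * ∫ v in a / m..(a + 1) / m, |v - x| ^ 5 ≤ 3 + 16 * |a - m * x| ^ 5 := by
  have hb : (a + 1) / m - x = (a - m * x + 1) / m := by field_simp; ring
  have ha : a / m - x = (a - m * x) / m := by field_simp
  rw [integral_abs_sub_pow_five, hb, ha, abs_div, abs_div, abs_of_pos hm, div_pow, div_pow]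
  calc _ = ((a - m * x + 1) ^ 5 * |a - m * x + 1| - (a - m * x) ^ 5 * |a - m * x|) / 6 := by
        field_simp
    _ ≤ _ := pow_five_mul_abs_add_one_sub_le _

lemma abs_mul_integral_sub_le {g : ℝ → ℝ} {m a x A : ℝ} (hm : 0 < m)
    (hg : IntervalIntegrable g volume (a / m) ((a + 1) / m))
    (hA : ∀ v, |g v - g x| ≤ A * (1 + m ^ 5 * |v - x| ^ 5)) :
    |(m * ∫ v in a / m..(a + 1) / m, g v) - g x| ≤ A * (4 + 16 * |a - m * x| ^ 5) := by
  have hA0 : 0 ≤ A := by simpa using hA x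
  have hab : a / m ≤ (a + 1) / m := by gcongr; linarith
  have hlen : (a + 1) / m - a / m = 1 / m := by ring
  have hc5 : Continuous fun v : ℝ => |v - x| ^ 5 := by fun_prop
  have hmean : (m * ∫ v in a / m..(a + 1) / m, g v) - g x =
      m * ∫ v in a / m..(a + 1) / m, (g v - g x) := by
    rw [intervalIntegral.integral_sub hg intervalIntegrable_const,
      intervalIntegral.integral_const, hlen, smul_eq_mul]
    field_simp
  have hmajorant : ∫ v in a / m..(a + 1) / m, |g v - g x| ≤
      ∫ v in a / m..(a + 1) / m, A * (1 + m ^ 5 * |v - x| ^ 5) :=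
    intervalIntegral.integral_mono_on hab (hg.sub intervalIntegrable_const).abs
      ((by fun_prop : Continuous fun v => A * (1 + m ^ 5 * |v - x| ^ 5)).intervalIntegrable _ _)
      (fun v _ => hA v)
  have hcompute : m * ∫ v in a / m..(a + 1) / m, A * (1 + m ^ 5 * |v - x| ^ 5) =
      A * (1 + m ^ 6 * ∫ v in a / m..(a + 1) / m, |v - x| ^ 5) := by
    rw [intervalIntegral.integral_const_mul, intervalIntegral.integral_add intervalIntegrable_const
      ((hc5.intervalIntegrable _ _).const_mul _), intervalIntegral.integral_const_mul,
      intervalIntegral.integral_const, hlen, smul_eq_mul]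
    field_simp
  calc |(m * ∫ v in a / m..(a + 1) / m, g v) - g x|
      = m * |∫ v in a / m..(a + 1) / m, (g v - g x)| := by rw [hmean, abs_mul, abs_of_pos hm]
    _ ≤ m * ∫ v in a / m..(a + 1) / m, |g v - g x| := by
        gcongr; exact intervalIntegral.abs_integral_le_integral_abs hab
    _ ≤ m * ∫ v in a / m..(a + 1) / m, A * (1 + m ^ 5 * |v - x| ^ 5) := by gcongr
    _ = A * (1 + m ^ 6 * ∫ v in a / m..(a + 1) / m, |v - x| ^ 5) := hcompute
    _ ≤ A * (1 + (3 + 16 * |a - m * x| ^ 5)) := by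
        gcongr; exact pow_six_mul_integral_abs_sub_pow_five_le hm a x
    _ = A * (4 + 16 * |a - m * x| ^ 5) := by ring

lemma abs_add_nat_mul_sub_le {g : ℝ → ℝ} {U ρ t : ℝ} (hU : 0 ≤ U)
    (hstep : ∀ x s, |s| ≤ ρ → |g (x + s) - g x| ≤ U * ((1 + x ^ 2) * (1 + s ^ 2)))
    (ht : |t| ≤ ρ) (x : ℝ) (n : ℕ) :
    |g (x + n * t) - g x| ≤ n * U * (1 + ρ ^ 2) * (1 + (|x| + n * |t|) ^ 2) := by
  induction n with
  | zero => simp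
  | succ n ih =>
    have hpoint : |x + n * t| ≤ |x| + (n + 1) * |t| := by
      have := abs_add_le x (n * t)
      rw [abs_mul, Nat.abs_cast] at this
      nlinarith [abs_nonneg t]
    have hlast : |g (x + (n + 1) * t) - g (x + n * t)| ≤
        U * (1 + ρ ^ 2) * (1 + (|x| + (n + 1) * |t|) ^ 2) := by
      have hs : t ^ 2 ≤ ρ ^ 2 := sq_le_sq' (abs_le.1 ht).1 (abs_le.1 ht).2
      have hx : (x + n * t) ^ 2 ≤ (|x| + (n + 1) * |t|) ^ 2 := by
        rw [← sq_abs]; gcongr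
      calc |g (x + (n + 1) * t) - g (x + n * t)| = |g (x + n * t + t) - g (x + n * t)| := by
            ring_nf
        _ ≤ U * ((1 + (x + n * t) ^ 2) * (1 + t ^ 2)) := hstep _ _ ht
        _ ≤ U * ((1 + (|x| + (n + 1) * |t|) ^ 2) * (1 + ρ ^ 2)) := by gcongr
        _ = _ := by ring
    have hprev : |g (x + n * t) - g x| ≤ n * U * (1 + ρ ^ 2) * (1 + (|x| + (n + 1) * |t|) ^ 2) :=
      ih.trans (by gcongr; linarith)
    push_cast
    calc |g (x + (n + 1) * t) - g x|
        ≤ |g (x + (n + 1) * t) - g (x + n * t)| + |g (x + n * t) - g x| := abs_sub_le _ _ _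
      _ ≤ _ := add_le_add hlast hprev
      _ = _ := by ring

lemma two_mul_add_one_mul_one_add_sq_le (a : ℝ) {X : ℝ} (hX : 0 ≤ X) :
    2 * (X + 1) * (1 + (a + X) ^ 2) ≤ 64 * (1 + a ^ 2) * (1 + X ^ 5) := by
  obtain ⟨h1, h2, h3⟩ : X ≤ 1 + X ^ 5 ∧ X ^ 2 ≤ 1 + X ^ 5 ∧ X ^ 3 ≤ 1 + X ^ 5 := by
    rcases le_or_gt X 1 with hX1 | hX1
    · exact ⟨by nlinarith [pow_nonneg hX 5], by nlinarith [pow_nonneg hX 5],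
        by nlinarith [pow_nonneg hX 5]⟩
    · exact ⟨by nlinarith [pow_le_pow_right₀ hX1.le (show 1 ≤ 5 by norm_num)],
        by nlinarith [pow_le_pow_right₀ hX1.le (show 2 ≤ 5 by norm_num)],
        by nlinarith [pow_le_pow_right₀ hX1.le (show 3 ≤ 5 by norm_num)]⟩
  nlinarith [sq_nonneg (a - X), mul_le_mul_of_nonneg_left h1 (sq_nonneg a), sq_nonneg a,
    pow_nonneg hX 5, mul_nonneg (sq_nonneg a) (pow_nonneg hX 5)]

lemma abs_sub_le_of_abs_add_sub_le {g : ℝ → ℝ} {U m : ℝ} (hU : 0 ≤ U) (hm : 1 ≤ m)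
    (hstep : ∀ x s, |s| ≤ 1 / m → |g (x + s) - g x| ≤ U * ((1 + x ^ 2) * (1 + s ^ 2)))
    (x y : ℝ) : |g y - g x| ≤ 64 * U * (1 + x ^ 2) * (1 + m ^ 5 * |y - x| ^ 5) := by
  have hm0 : 0 < m := by linarith
  set d := y - x
  -- `n` steps of length `|d| / n ≤ 1 / m`; the `max 1` keeps `n ≠ 0` when `d = 0`.
  set n : ℕ := max 1 ⌈m * |d|⌉₊
  have hn0 : (0:ℝ) < n := by simp [n]
  have hnd : m * |d| ≤ n := (Nat.le_ceil _).trans (by exact_mod_cast le_max_right _ _)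
  have hn : (n:ℝ) ≤ m * |d| + 1 := by
    simp only [n, Nat.cast_max, Nat.cast_one]
    exact max_le (by nlinarith [abs_nonneg d]) (Nat.ceil_lt_add_one (by positivity)).le
  have ht : |d / n| ≤ 1 / m := by
    rw [abs_div, Nat.abs_cast, div_le_div_iff₀ hn0 hm0]; linarith
  have hchain := abs_add_nat_mul_sub_le hU hstep ht x n
  rw [abs_div, Nat.abs_cast, mul_div_cancel₀ _ hn0.ne', mul_div_cancel₀ _ hn0.ne',
    show x + d = y by ring] at hchain
  have hρ : (1 / m) ^ 2 ≤ 1 := by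
    rw [div_pow, one_pow]; exact div_le_one_of_le₀ (by nlinarith) (by positivity)
  have hdX : |d| ≤ m * |d| := le_mul_of_one_le_left (abs_nonneg d) hm
  calc |g y - g x| ≤ n * U * (1 + (1 / m) ^ 2) * (1 + (|x| + |d|) ^ 2) := hchain
    _ ≤ (m * |d| + 1) * U * 2 * (1 + (|x| + m * |d|) ^ 2) := by gcongr; linarith
    _ = U * (2 * (m * |d| + 1) * (1 + (|x| + m * |d|) ^ 2)) := by ring
    _ ≤ U * (64 * (1 + |x| ^ 2) * (1 + (m * |d|) ^ 5)) :=
        mul_le_mul_of_nonneg_left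
          (two_mul_add_one_mul_one_add_sq_le |x| (by positivity)) hU
    _ = 64 * U * (1 + x ^ 2) * (1 + m ^ 5 * |d| ^ 5) := by rw [sq_abs]; ring

lemma Upsilon_nonneg (h : ℝ → ℝ) (ρ : ℝ) : 0 ≤ Upsilon h ρ :=
  Real.sSup_nonneg (by rintro _ ⟨u, z, -, -, -, rfl⟩; positivity)

lemma abs_comp_exp_add_sub_le_Upsilon {h : ℝ → ℝ} {K ρ : ℝ}
    (hK : ∀ z : ℝ, 0 < z → |h z| / (1 + log z ^ 2) ≤ K) (x t : ℝ) (ht : |t| ≤ ρ) :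
    |h (exp (x + t)) - h (exp x)| ≤ Upsilon h ρ * ((1 + x ^ 2) * (1 + t ^ 2)) := by
  have hbdd : BddAbove {y : ℝ | ∃ u z : ℝ, 0 < u ∧ 0 < z ∧ |log u| ≤ ρ ∧
      y = |h (u * z) - h z| / ((1 + log z ^ 2) * (1 + log u ^ 2))} := by
    refine ⟨3 * K, ?_⟩
    rintro _ ⟨u, z, hu, hz, -, rfl⟩
    have hw (w : ℝ) (hw : 0 < w) : |h w| ≤ K * (1 + log w ^ 2) :=
      (div_le_iff₀ (by positivity)).1 (hK w hw)
    have hK0 : 0 ≤ K := (div_nonneg (abs_nonneg _) (by positivity)).trans (hK 1 one_pos)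
    have hsplit : 1 + log (u * z) ^ 2 ≤ 2 * ((1 + log z ^ 2) * (1 + log u ^ 2)) := by
      rw [log_mul hu.ne' hz.ne']
      nlinarith [sq_nonneg (log u - log z), sq_nonneg (log u * log z)]
    rw [div_le_iff₀ (by positivity)]
    calc |h (u * z) - h z| ≤ |h (u * z)| + |h z| := abs_sub _ _
      _ ≤ K * (1 + log (u * z) ^ 2) + K * ((1 + log z ^ 2) * 1) := by
          rw [mul_one]; exact add_le_add (hw _ (mul_pos hu hz)) (hw z hz)
      _ ≤ K * (2 * ((1 + log z ^ 2) * (1 + log u ^ 2))) +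
          K * ((1 + log z ^ 2) * (1 + log u ^ 2)) := by
          gcongr; nlinarith [sq_nonneg (log u)]
      _ = 3 * K * ((1 + log z ^ 2) * (1 + log u ^ 2)) := by ring
  have hmem := le_csSup hbdd ⟨exp t, exp x, exp_pos t, exp_pos x, by rwa [log_exp], rfl⟩
  rwa [← exp_add, add_comm t, log_exp, log_exp, div_le_iff₀ (by positivity)] at hmem

lemma intervalIntegrable_comp_exp {h : ℝ → ℝ} {K : ℝ} (hmeas : Measurable h)
    (hK : ∀ z : ℝ, 0 < z → |h z| / (1 + log z ^ 2) ≤ K) (a b : ℝ) :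
    IntervalIntegrable (fun v => h (exp v)) volume a b := by
  refine ((by fun_prop : Continuous fun v : ℝ => K * (1 + v ^ 2)).intervalIntegrable a b).mono_fun'
    (hmeas.comp measurable_exp).aestronglyMeasurable.restrict (Filter.Eventually.of_forall ?_)
  intro v
  have hv := hK (exp v) (exp_pos v)
  rwa [log_exp, div_le_iff₀ (by positivity)] at hv

lemma abs_iSup_sub_iSup_le {ι : Type*} [Nonempty ι] {f g : ι → ℝ} {C : ℝ}
    (hg : BddAbove (Set.range g)) (hfg : ∀ i, |f i - g i| ≤ C) :
    |(⨆ i, f i) - ⨆ i, g i| ≤ C := by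
  have ⟨M, hM⟩ := hg
  have hf : BddAbove (Set.range f) :=
    ⟨M + C, by rintro _ ⟨i, rfl⟩; linarith [hM ⟨i, rfl⟩, (abs_le.1 (hfg i)).2]⟩
  rw [abs_sub_le_iff]
  constructor
  · have : (⨆ i, f i) ≤ (⨆ i, g i) + C :=
      ciSup_le fun i => by linarith [le_ciSup hg i, (abs_le.1 (hfg i)).2]
    linarith
  · have : (⨆ i, g i) ≤ (⨆ i, f i) + C :=
      ciSup_le fun i => by linarith [le_ciSup hf i, (abs_le.1 (hfg i)).1]
    linarith

lemma abs_iSup_div_iSup_sub_le {ι : Type*} [Nonempty ι] {a k : ι → ℝ} {c C ζ : ℝ}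
    (hζ : 0 < ζ) (hk : BddAbove (Set.range k)) (hζk : ζ ≤ ⨆ i, k i) (hc : 0 ≤ c)
    (hak : ∀ i, |a i - c * k i| ≤ C) :
    |(⨆ i, a i) / (⨆ i, k i) - c| ≤ C / ζ := by
  have ⟨M, hM⟩ := hk
  have hck : BddAbove (Set.range fun i => c * k i) :=
    ⟨c * M, by rintro _ ⟨i, rfl⟩; exact mul_le_mul_of_nonneg_left (hM ⟨i, rfl⟩) hc⟩
  have hsup := abs_iSup_sub_iSup_le hck hak
  rw [← Real.mul_iSup_of_nonneg hc] at hsup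
  have hk0 : 0 < ⨆ i, k i := hζ.trans_le hζk
  rw [show (⨆ i, a i) / (⨆ i, k i) - c = ((⨆ i, a i) - c * ⨆ i, k i) / ⨆ i, k i by field_simp,
    abs_div, abs_of_pos hk0]
  calc _ ≤ C / ⨆ i, k i := by gcongr
    _ ≤ C / ζ := by gcongr; exact (abs_nonneg _).trans hsup

lemma le_iSup_kernel_of_le_on_Icc {κ : ℝ → ℝ} {ζ s : ℝ} (hs : 0 < s)
    (hinf : ∀ u ∈ Set.Icc (1 : ℝ) (exp 1), ζ ≤ κ u)
    (hbdd : BddAbove (Set.range fun j : ℤ => κ (exp (-(j : ℝ)) * s))) :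
    ζ ≤ ⨆ j : ℤ, κ (exp (-(j : ℝ)) * s) := by
  have hshift : exp (-(⌊log s⌋ : ℝ)) * s = exp (log s - ⌊log s⌋) := by
    rw [exp_sub, exp_log hs, exp_neg]; ring
  refine (hinf _ ⟨?_, ?_⟩).trans (le_ciSup hbdd ⌊log s⌋) <;> rw [hshift]
  · exact one_le_exp (by linarith [Int.floor_le (log s)])
  · exact exp_le_exp.2 (by linarith [Int.lt_floor_add_one (log s)])

lemma abs_mul_mean_comp_exp_sub_le {h : ℝ → ℝ} {K m M0 M5 k a x : ℝ} (hmeas : Measurable h)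
    (hK : ∀ z : ℝ, 0 < z → |h z| / (1 + log z ^ 2) ≤ K) (hm : 1 ≤ m)
    (hk0 : |k| ≤ M0) (hk5 : |k| * |a - m * x| ^ 5 ≤ M5) :
    |k * (m * ∫ v in a / m..(a + 1) / m, h (exp v)) - h (exp x) * k| ≤
      256 * Upsilon h (1 / m) * (1 + x ^ 2) * (M0 + 4 * M5) := by
  have hU := Upsilon_nonneg h (1 / m)
  have hmean := abs_mul_integral_sub_le (g := fun v => h (exp v)) (a := a) (by linarith : 0 < m)
    (intervalIntegrable_comp_exp hmeas hK _ _)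
    fun v => abs_sub_le_of_abs_add_sub_le (g := fun v => h (exp v)) hU hm
      (fun y t => abs_comp_exp_add_sub_le_Upsilon hK y t) x v
  calc _ = |k| * |(m * ∫ v in a / m..(a + 1) / m, h (exp v)) - h (exp x)| := by
        rw [← abs_mul]; ring_nf
    _ ≤ |k| * (64 * Upsilon h (1 / m) * (1 + x ^ 2) * (4 + 16 * |a - m * x| ^ 5)) := by gcongr
    _ = 64 * Upsilon h (1 / m) * (1 + x ^ 2) * (4 * |k| + 16 * (|k| * |a - m * x| ^ 5)) := by
        ring
    _ ≤ 64 * Upsilon h (1 / m) * (1 + x ^ 2) * (4 * M0 + 16 * M5) := by gcongr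
    _ = 256 * Upsilon h (1 / m) * (1 + x ^ 2) * (M0 + 4 * M5) := by ring

theorem MopZ_quantitative_estimate_general (κ : ℝ → ℝ)
    (M0 M5 ζ : ℝ) (hζ : 0 < ζ)
    (hinf : ∀ u ∈ Set.Icc (1 : ℝ) (Real.exp 1), ζ ≤ κ u)
    (hm0 : ∀ s : ℝ, 0 < s → ∀ j : ℤ, |κ (Real.exp (-(j : ℝ)) * s)| ≤ M0)
    (hm5 : ∀ s : ℝ, 0 < s → ∀ j : ℤ,
      |κ (Real.exp (-(j : ℝ)) * s)| * |(j : ℝ) - Real.log s| ^ 5 ≤ M5)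
    (h : ℝ → ℝ) (hmeas : Measurable h) (hpos : ∀ x : ℝ, 0 < x → 0 ≤ h x)
    (hmem : MemVw h) (m : ℝ) (hm : 1 ≤ m) :
    ∀ z : ℝ, 0 < z →
      |MopZ κ m h z - h z| / (1 + (Real.log z) ^ 2) ≤
        (256 * Upsilon h (1/m) / ζ) * (M0 + 4 * M5) := by
  intro z hz
  obtain ⟨-, K, hK⟩ := hmem
  have hs : 0 < z ^ m := rpow_pos_of_pos hz m
  have hkbdd : BddAbove (Set.range fun j : ℤ => κ (exp (-(j : ℝ)) * z ^ m)) :=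
    ⟨M0, by rintro _ ⟨j, rfl⟩; exact (le_abs_self _).trans (hm0 _ hs j)⟩
  have hsample (j : ℤ) := exp_log hz ▸ abs_mul_mean_comp_exp_sub_le hmeas hK hm (hm0 _ hs j)
    (log_rpow hz m ▸ hm5 _ hs j)
  have hbound := abs_iSup_div_iSup_sub_le hζ hkbdd (le_iSup_kernel_of_le_on_Icc hs hinf hkbdd)
    (hpos z hz) hsample
  rw [div_le_iff₀ (by positivity)]
  -- `sSup (Set.range f)` is `⨆ j, f j` by definition, so `hbound` is a statement about `MopZ`.
  exact hbound.trans_eq (by ring)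

theorem MopZ_quantitative_estimate (κ : ℝ → ℝ) (hκmeas : Measurable κ)
    (M0 M5 ζ : ℝ) (hζ : 0 < ζ)
    (hinf : ∀ u ∈ Set.Icc (1 : ℝ) (Real.exp 1), ζ ≤ κ u)
    (hm0 : ∀ s : ℝ, 0 < s → ∀ j : ℤ, |κ (Real.exp (-(j : ℝ)) * s)| ≤ M0)
    (hm5 : ∀ s : ℝ, 0 < s → ∀ j : ℤ,
      |κ (Real.exp (-(j : ℝ)) * s)| * |(j : ℝ) - Real.log s| ^ 5 ≤ M5)
    (h : ℝ → ℝ) (hmeas : Measurable h) (hpos : ∀ x : ℝ, 0 < x → 0 ≤ h x)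
    (hmem : MemVw h) (m : ℝ) (hm : 1 ≤ m) :
    ∀ z : ℝ, 0 < z →
      |MopZ κ m h z - h z| / (1 + (Real.log z) ^ 2) ≤
        (256 * Upsilon h (1/m) / ζ) * (M0 + 4 * M5) :=
  MopZ_quantitative_estimate_general κ M0 M5 ζ hζ hinf hm0 hm5 h hmeas hpos hmem m hm
end
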